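/- arXiv:2004.02129 — 2 statements merged into one kernel-verified Lean document; each statement's English description precedes it below -/
import Mathlib

section
/- The map lab ↦ F_lab = { a ∈ A : lab(a) = ⊕ } is a bijection between the set of minimal valid labelings of a digraph G (valid labelings whose set of ⊕-arcs is minimal under inclusion among valid labelings) and the set of minimal feedback arc sets of G. -/
/-!
The `⊕`-arcs of a valid labeling form a feedback arc set: a cycle avoiding them consists
of `⊖`-arcs, and read backwards it is a closed walk of the reversed multidigraph through a
`⊖`-arc.
Conversely, a feedback arc set `F` contains the `⊕`-arcs of a valid labeling, obtained from a
topological numbering of `A \ F`. Hence minimal elements on the two sides correspond.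
-/

namespace UD

variable {V : Type*}

/-- Source of arc `a` in the multidigraph where `⊖`-arcs (label `false`) are reversed. -/
def src (lab : V × V → Bool) (a : V × V) : V := if lab a then a.1 else a.2

/-- Destination of arc `a` in the multidigraph where `⊖`-arcs are reversed. -/
def dst (lab : V × V → Bool) (a : V × V) : V := if lab a then a.2 else a.1

/-- `l` is a (nonempty) walk from `x` to `y` in the multidigraph obtained from the
arcs `A` by reversing the orientation of the arcs labeled `⊖` (`false`). -/
def IsRevWalk (A : Finset (V × V)) (lab : V × V → Bool) (l : List (V × V)) (x y : V) : Prop :=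
  l ≠ [] ∧ (∀ a ∈ l, a ∈ A) ∧ l.Chain' (fun a b => dst lab a = src lab b) ∧
    l.head?.map (src lab) = some x ∧ l.getLast?.map (dst lab) = some y

/-- `l` uses at least one `⊖`-labeled arc. -/
def Negative (lab : V × V → Bool) (l : List (V × V)) : Prop := ∃ a ∈ l, lab a = false

/-- A labeling is valid iff no closed walk of the reversed multidigraph uses a `⊖` arc. -/
def Valid (A : Finset (V × V)) (lab : V × V → Bool) : Prop :=
  ∀ l : List (V × V), (∃ x, IsRevWalk A lab l x x) → ¬ Negative lab l

/-- Plain directed walk in the digraph with arc set `A`. -/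
def IsWalk (A : Finset (V × V)) (l : List (V × V)) (x y : V) : Prop :=
  l ≠ [] ∧ (∀ a ∈ l, a ∈ A) ∧ l.Chain' (fun a b => a.2 = b.1) ∧
    l.head?.map Prod.fst = some x ∧ l.getLast?.map Prod.snd = some y

def Acyclic (A : Finset (V × V)) : Prop := ∀ l x, ¬ IsWalk A l x x

def IsFAS [DecidableEq V] (A F : Finset (V × V)) : Prop := F ⊆ A ∧ Acyclic (A \ F)

def IsMinFAS [DecidableEq V] (A F : Finset (V × V)) : Prop :=
  IsFAS A F ∧ ∀ F' : Finset (V × V), F' ⊂ F → ¬ IsFAS A F'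

/-- Extend a labeling of the arcs of `A` to all of `V × V` (by `⊕` outside `A`). -/
def ext [DecidableEq V] (A : Finset (V × V)) (lab : A → Bool) : V × V → Bool :=
  fun a => if h : a ∈ A then lab ⟨a, h⟩ else true

def ValidOn [DecidableEq V] (A : Finset (V × V)) (lab : A → Bool) : Prop := Valid A (ext A lab)

/-- Number of valid labelings (update digraphs) of the digraph with arc set `A`. -/
noncomputable def numUD [DecidableEq V] (A : Finset (V × V)) : ℕ := Nat.card {lab : A → Bool // ValidOn A lab}

inductive PClass
  | pos | neg | none
  deriving DecidableEq

/-- Connectivity class of the ordered pair `(x, y)` in the reversed multidigraph. -/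
def HasClass (A : Finset (V × V)) (lab : V × V → Bool) (x y : V) : PClass → Prop
  | .pos => (∃ l, IsRevWalk A lab l x y) ∧ ∀ l, IsRevWalk A lab l x y → ¬ Negative lab l
  | .neg => ∃ l, IsRevWalk A lab l x y ∧ Negative lab l
  | .none => ¬ ∃ l, IsRevWalk A lab l x y

/-- Number of valid labelings in the class `(s, t)` of the oss-graph `(A, α, β)`. -/
noncomputable def classCount [DecidableEq V] (A : Finset (V × V)) (α β : V) (s t : PClass) : ℕ :=
  Nat.card {lab : A → Bool //
    ValidOn A lab ∧ HasClass A (ext A lab) α β s ∧ HasClass A (ext A lab) β α t}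

/-- Index of the part of the ordered partition `B` containing `v`. -/
def partIdx [DecidableEq V] (B : List (Finset V)) (v : V) : ℕ :=
  B.findIdx (fun P => decide (v ∈ P))

/-- `B` is an ordered partition of `V` (a block-sequential update schedule). -/
def IsOrdPartition [DecidableEq V] (B : List (Finset V)) : Prop :=
  (∀ P ∈ B, P.Nonempty) ∧ B.Pairwise Disjoint ∧ ∀ v : V, ∃ P ∈ B, v ∈ P

/-- The labeling induced by a schedule: `⊕` (true) iff `i`'s part is not strictly before `j`'s. -/
def labSched [DecidableEq V] (B : List (Finset V)) : V × V → Bool :=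
  fun a => decide (partIdx B a.2 ≤ partIdx B a.1)

/-- `lab` is a minimal valid labeling: it is valid (and labels `⊖` outside `A`), and its set
of `⊕`-arcs is minimal under inclusion among those of valid labelings. -/
def MinValidLab [DecidableEq V] (A : Finset (V × V)) (lab : V × V → Bool) : Prop :=
  Valid A lab ∧ (∀ a, a ∉ A → lab a = false) ∧
    ∀ lab' : V × V → Bool, Valid A lab' →
      A.filter (fun a => lab' a = true) ⊆ A.filter (fun a => lab a = true) →
      A.filter (fun a => lab' a = true) = A.filter (fun a => lab a = true)

section Walks

variable {A S : Finset (V × V)} {lab : V × V → Bool}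

theorem isRevWalk_singleton {a : V × V} {x y : V} :
    IsRevWalk A lab [a] x y ↔ a ∈ A ∧ src lab a = x ∧ dst lab a = y := by
  simp [IsRevWalk, List.Chain']

theorem isRevWalk_cons_cons {a b : V × V} {t : List (V × V)} {x y : V} :
    IsRevWalk A lab (a :: b :: t) x y ↔
      a ∈ A ∧ src lab a = x ∧ IsRevWalk A lab (b :: t) (dst lab a) y := by
  simp only [IsRevWalk, List.Chain', List.isChain_cons_cons, List.mem_cons, List.head?_cons,
    List.getLast?_cons_cons, Option.map_some, Option.some.injEq, ne_eq, reduceCtorEq,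
    not_false_eq_true, true_and, forall_eq_or_imp]
  constructor
  · rintro ⟨⟨ha, hb, ht⟩, ⟨hab, hch⟩, hx, hy⟩
    exact ⟨ha, hx, ⟨hb, ht⟩, hch, hab.symm, hy⟩
  · rintro ⟨ha, hx, ⟨hb, ht⟩, hch, hab, hy⟩
    exact ⟨⟨ha, hb, ht⟩, ⟨hab.symm, hch⟩, hx, hy⟩

theorem IsRevWalk.potential_le {α : Type*} [Preorder α] {g : V → α}
    (hle : ∀ a ∈ A, g (dst lab a) ≤ g (src lab a))
    (hlt : ∀ a ∈ A, lab a = false → g (dst lab a) < g (src lab a)) :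
    ∀ {l : List (V × V)} {x y : V}, IsRevWalk A lab l x y →
      g y ≤ g x ∧ (Negative lab l → g y < g x)
  | [], _, _, h => absurd rfl h.1
  | [a], x, y, h => by
    obtain ⟨ha, rfl, rfl⟩ := isRevWalk_singleton.1 h
    refine ⟨hle a ha, fun ⟨b, hb, hneg⟩ => ?_⟩
    rw [List.mem_singleton] at hb
    exact hb ▸ hlt b (hb ▸ ha) hneg
  | a :: b :: t, x, y, h => by
    obtain ⟨ha, rfl, htail⟩ := isRevWalk_cons_cons.1 h
    obtain ⟨ih_le, ih_lt⟩ := IsRevWalk.potential_le hle hlt htail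
    refine ⟨ih_le.trans (hle a ha), fun ⟨c, hc, hneg⟩ => ?_⟩
    rcases List.mem_cons.1 hc with rfl | hc
    · exact ih_le.trans_lt (hlt c ha hneg)
    · exact (ih_lt ⟨c, hc, hneg⟩).trans_le (hle a ha)

theorem valid_of_potential {α : Type*} [Preorder α] (g : V → α)
    (hle : ∀ a ∈ A, g (dst lab a) ≤ g (src lab a))
    (hlt : ∀ a ∈ A, lab a = false → g (dst lab a) < g (src lab a)) :
    Valid A lab := fun _ ⟨_, hw⟩ hneg =>
  lt_irrefl _ ((IsRevWalk.potential_le hle hlt hw).2 hneg)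

theorem IsWalk.cons {l : List (V × V)} {x y z : V} (hxy : (x, y) ∈ S)
    (h : IsWalk S l y z) : IsWalk S ((x, y) :: l) x z := by
  obtain ⟨hne, hmem, hch, hhd, hlast⟩ := h
  obtain ⟨b, t, rfl⟩ := List.exists_cons_of_ne_nil hne
  simp only [List.head?_cons, Option.map_some, Option.some.injEq] at hhd
  refine ⟨List.cons_ne_nil _ _, ?_, List.isChain_cons_cons.2 ⟨hhd.symm, hch⟩, rfl, ?_⟩
  · simpa [hxy] using hmem
  · simpa using hlast

theorem exists_isWalk_of_transGen {x y : V}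
    (h : Relation.TransGen (fun u v => (u, v) ∈ S) x y) : ∃ l, IsWalk S l x y := by
  induction h using Relation.TransGen.head_induction_on with
  | single hxy =>
    exact ⟨_, List.cons_ne_nil _ [], List.forall_mem_singleton.2 hxy, List.isChain_singleton _, rfl,
      rfl⟩
  | head hxy _ ih =>
    obtain ⟨l, hl⟩ := ih
    exact ⟨_, hl.cons hxy⟩

/-- Number each vertex by its count of proper ancestors. -/
theorem Acyclic.exists_numbering (hS : Acyclic S) :
    ∃ h : V → ℕ, ∀ a ∈ S, h a.1 < h a.2 := by
  classical
  let R : V → V → Prop := fun u v => (u, v) ∈ S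
  let anc : V → Finset V := fun v => {u ∈ S.image Prod.fst | Relation.TransGen R u v}
  refine ⟨fun v => (anc v).card, fun a ha => Finset.card_lt_card ?_⟩
  have hmem : a.1 ∈ S.image Prod.fst := Finset.mem_image_of_mem _ ha
  refine Finset.ssubset_iff_subset_ne.2 ⟨fun u hu => ?_, fun heq => ?_⟩
  · simp only [anc, Finset.mem_filter] at hu ⊢
    exact ⟨hu.1, hu.2.tail ha⟩
  · have : a.1 ∈ anc a.1 := heq ▸ Finset.mem_filter.2 ⟨hmem, .single ha⟩
    obtain ⟨l, hl⟩ := exists_isWalk_of_transGen (Finset.mem_filter.1 this).2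
    exact hS l _ hl

theorem IsWalk.reverse_isRevWalk {l : List (V × V)} {x y : V} (h : IsWalk S l x y)
    (hneg : ∀ a ∈ l, a ∈ A ∧ lab a = false) : IsRevWalk A lab l.reverse y x := by
  have hsrc : ∀ a ∈ l, src lab a = a.2 := fun a ha => by simp [src, (hneg a ha).2]
  have hdst : ∀ a ∈ l, dst lab a = a.1 := fun a ha => by simp [dst, (hneg a ha).2]
  obtain ⟨hne, -, hch, hhd, hlast⟩ := h
  refine ⟨by simpa using hne, fun a ha => (hneg a (List.mem_reverse.1 ha)).1,
    List.isChain_reverse.2 (hch.imp_of_mem_imp fun a b ha hb hab => ?_), ?_, ?_⟩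
  · rw [hdst b hb, hsrc a ha, hab]
  · obtain ⟨z, hz, rfl⟩ := Option.map_eq_some_iff.1 hlast
    rw [List.head?_reverse, hz, Option.map_some, hsrc z (List.mem_of_getLast? hz)]
  · obtain ⟨z, hz, rfl⟩ := Option.map_eq_some_iff.1 hhd
    rw [List.getLast?_reverse, hz, Option.map_some, hdst z (List.mem_of_head? hz)]

end Walks

variable [DecidableEq V] {A F : Finset (V × V)} {lab : V × V → Bool}

theorem isFAS_of_valid (h : Valid A lab) : IsFAS A (A.filter (fun a => lab a = true)) := by
  refine ⟨Finset.filter_subset _ _, fun l x hw => ?_⟩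
  have hneg : ∀ a ∈ l, a ∈ A ∧ lab a = false := fun a ha => by
    obtain ⟨haA, hnot⟩ := Finset.mem_sdiff.1 (hw.2.1 a ha)
    exact ⟨haA, by simpa [haA] using hnot⟩
  obtain ⟨a, ha⟩ := List.exists_mem_of_ne_nil l hw.1
  exact h _ ⟨x, hw.reverse_isRevWalk hneg⟩ ⟨a, List.mem_reverse.2 ha, (hneg a ha).2⟩

/-- Order the vertices by a topological numbering `h` of `A \ F` and label `⊖` exactly the
arcs of `A` that go forward. -/
theorem exists_valid_subset_of_isFAS (hF : IsFAS A F) :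
    ∃ lab : V × V → Bool, Valid A lab ∧ (∀ a, a ∉ A → lab a = false) ∧
      A.filter (fun a => lab a = true) ⊆ F := by
  obtain ⟨h, hh⟩ := hF.2.exists_numbering
  refine ⟨fun a => decide (a ∈ A ∧ h a.2 ≤ h a.1), valid_of_potential h ?_ ?_,
    fun a ha => by simp [ha], fun a ha => ?_⟩
  · intro a ha
    by_cases hle : h a.2 ≤ h a.1
    · simp [src, dst, ha, hle]
    · simp only [src, dst, ha, hle, and_false, decide_false, Bool.false_eq_true, if_false]
      omega
  · intro a ha hneg
    simp only [decide_eq_false_iff_not, not_and, not_le] at hneg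
    have hlt := hneg ha
    simp [src, dst, ha, not_le.2 hlt, hlt]
  · simp only [Finset.mem_filter, decide_eq_true_eq] at ha
    by_contra haF
    exact (hh a (Finset.mem_sdiff.2 ⟨ha.1, haF⟩)).not_ge ha.2.2

theorem IsMinFAS.filter_eq_of_valid (hF : IsMinFAS A F) (hlab : Valid A lab)
    (hsub : A.filter (fun a => lab a = true) ⊆ F) :
    A.filter (fun a => lab a = true) = F := by
  by_contra hne
  exact hF.2 _ (Finset.ssubset_iff_subset_ne.2 ⟨hsub, hne⟩) (isFAS_of_valid hlab)

theorem eq_of_filter_eq {lab' : V × V → Bool} (hlab : ∀ a, a ∉ A → lab a = false)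
    (hlab' : ∀ a, a ∉ A → lab' a = false)
    (h : A.filter (fun a => lab a = true) = A.filter (fun a => lab' a = true)) : lab = lab' := by
  funext a
  by_cases ha : a ∈ A
  · simpa [ha] using Finset.ext_iff.1 h a
  · rw [hlab a ha, hlab' a ha]

/-- `lab ↦ F_lab` is a bijection between minimal valid labelings and minimal feedback arc
sets. -/
theorem statement5 {V : Type*} [DecidableEq V] (A : Finset (V × V)) :
    Set.BijOn (fun lab : V × V → Bool => A.filter (fun a => lab a = true))
      {lab | MinValidLab A lab} {F | IsMinFAS A F} := by
  refine ⟨?_, ?_, ?_⟩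
  · rintro lab ⟨hv, -, hmin⟩
    refine ⟨isFAS_of_valid hv, fun F' hF' hfas => ?_⟩
    obtain ⟨lab', hv', -, hsub'⟩ := exists_valid_subset_of_isFAS hfas
    have heq := hmin lab' hv' (hsub'.trans hF'.subset)
    exact hF'.not_subset (heq.symm.subset.trans hsub')
  · rintro lab ⟨-, hout, -⟩ lab' ⟨-, hout', -⟩ h
    exact eq_of_filter_eq hout hout' h
  · rintro F hF
    obtain ⟨lab, hv, hout, hsub⟩ := exists_valid_subset_of_isFAS hF.1
    have hlabF := hF.filter_eq_of_valid hv hsub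
    refine ⟨lab, ⟨hv, hout, fun lab' hv' hsub' => ?_⟩, hlabF⟩
    rw [hlabF] at hsub' ⊢
    exact hF.filter_eq_of_valid hv' hsub'

end UD
end

section
/- Let (D,α,β) be the parallel composition of oss-graphs (G,α,β) and (G',α',β') on disjoint vertex sets, identifying α with α' and β with β'. If lab ∈ UD_{α,β}^{+,+}(G) and lab' ∈ UD_{α',β'}^{−,∅}(G'), then the union labeling lab ∪ lab' is not a valid labeling of D. -/
namespace UD

variable {V : Type*}

/-- Map the vertices of `G'` into the parallel composition identifying `α'` with `α` and
`β'` with `β`. -/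
def pmap {V V' : Type*} [DecidableEq V'] (α β : V) (α' β' : V') : V' → V ⊕ V' :=
  fun w => if w = α' then Sum.inl α else if w = β' then Sum.inl β else Sum.inr w

/-- Arc set of the parallel composition of `(G, α, β)` and `(G', α', β')`. -/
def parArcs {V V' : Type*} [DecidableEq V] [DecidableEq V'] (A : Finset (V × V))
    (A' : Finset (V' × V')) (α β : V) (α' β' : V') : Finset ((V ⊕ V') × (V ⊕ V')) :=
  A.image (fun a => (Sum.inl a.1, Sum.inl a.2)) ∪
    A'.image (fun a => (pmap α β α' β' a.1, pmap α β α' β' a.2))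

/-- Preimage in `V'` of an identified vertex of `V`. -/
def pinv {V V' : Type*} [DecidableEq V] (α : V) (α' β' : V') : V → V' :=
  fun x => if x = α then α' else β'

/-- The union labeling on the parallel composition. -/
def parLab {V V' : Type*} [DecidableEq V] (A : Finset (V × V)) (α : V) (α' β' : V')
    (lab : V × V → Bool) (lab' : V' × V' → Bool) : (V ⊕ V') × (V ⊕ V') → Bool := fun b =>
  match b with
  | (Sum.inl x, Sum.inl y) =>
      if (x, y) ∈ A then lab (x, y) else lab' (pinv α α' β' x, pinv α α' β' y)
  | (Sum.inl x, Sum.inr w) => lab' (pinv α α' β' x, w)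
  | (Sum.inr w, Sum.inl y) => lab' (w, pinv α α' β' y)
  | (Sum.inr w, Sum.inr w') => lab' (w, w')

/-!
A negative walk from `α'` to `β'` in `G'` followed by a walk from `β` back to `α` in `G`
(which exists because the class of `(β, α)` is `+`) is a closed walk of `D` through a
`⊖`-arc. This only needs the union labeling to restrict to `lab` on the arcs of `G` and to
`lab'` on those of `G'`, which holds as long as no arc of `G'` is merged with an arc of `G`.
-/

section RevWalk

variable {V W : Type*} {A : Finset (V × V)} {lab : V × V → Bool} {l m : List (V × V)}
  {x y z : V}

theorem IsRevWalk.append (hl : IsRevWalk A lab l x y) (hm : IsRevWalk A lab m y z) :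
    IsRevWalk A lab (l ++ m) x z := by
  obtain ⟨hl0, hlA, hlc, hlx, hly⟩ := hl
  obtain ⟨hm0, hmA, hmc, hmy, hmz⟩ := hm
  refine ⟨by simp [hl0], fun a ha => ?_, ?_, ?_, ?_⟩
  · rcases List.mem_append.mp ha with ha | ha
    exacts [hlA a ha, hmA a ha]
  · refine List.isChain_append.mpr ⟨hlc, hmc, fun a ha b hb => ?_⟩
    rw [Option.mem_def] at ha hb
    rw [ha, Option.map_some] at hly
    rw [hb, Option.map_some] at hmy
    exact (Option.some.inj hly).trans (Option.some.inj hmy).symm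
  · rwa [List.head?_append_of_ne_nil _ hl0]
  · rwa [List.getLast?_append_of_ne_nil _ hm0]

theorem src_prodMap {lab' : W × W → Bool} (g : V → W) {a : V × V}
    (h : lab' (Prod.map g g a) = lab a) : src lab' (Prod.map g g a) = g (src lab a) := by
  simp only [src, h]
  split <;> rfl

theorem dst_prodMap {lab' : W × W → Bool} (g : V → W) {a : V × V}
    (h : lab' (Prod.map g g a) = lab a) : dst lab' (Prod.map g g a) = g (dst lab a) := by
  simp only [dst, h]
  split <;> rfl

theorem IsRevWalk.map {B : Finset (W × W)} {lab' : W × W → Bool} (g : V → W)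
    (hB : ∀ a ∈ A, Prod.map g g a ∈ B) (hlab : ∀ a ∈ A, lab' (Prod.map g g a) = lab a)
    (hl : IsRevWalk A lab l x y) : IsRevWalk B lab' (l.map (Prod.map g g)) (g x) (g y) := by
  obtain ⟨hl0, hlA, hlc, hlx, hly⟩ := hl
  refine ⟨by simpa using hl0, fun b hb => ?_, ?_, ?_, ?_⟩
  · obtain ⟨a, ha, rfl⟩ := List.mem_map.mp hb
    exact hB a (hlA a ha)
  · refine List.isChain_map_of_isChain _ (fun a b ⟨ha, hb, hab⟩ => ?_)
      (List.IsChain.iff_mem.mp hlc)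
    rw [dst_prodMap g (hlab a (hlA a ha)), src_prodMap g (hlab b (hlA b hb)), hab]
  · obtain ⟨a, ha⟩ : ∃ a, l.head? = some a := Option.ne_none_iff_exists'.mp (by simpa using hl0)
    rw [ha, Option.map_some] at hlx
    rw [List.head?_map, ha, Option.map_some, Option.map_some,
      src_prodMap g (hlab a (hlA a (List.mem_of_mem_head? ha))), Option.some.inj hlx]
  · obtain ⟨a, ha⟩ : ∃ a, l.getLast? = some a :=
      Option.ne_none_iff_exists'.mp (by simpa using hl0)
    rw [ha, Option.map_some] at hly
    rw [List.getLast?_map, ha, Option.map_some, Option.map_some,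
      dst_prodMap g (hlab a (hlA a (List.mem_of_mem_getLast? ha))), Option.some.inj hly]

theorem Negative.map {lab' : W × W → Bool} {f : V × V → W × W}
    (hlab : ∀ a ∈ l, lab' (f a) = lab a) (h : Negative lab l) : Negative lab' (l.map f) := by
  obtain ⟨a, ha, hneg⟩ := h
  exact ⟨f a, List.mem_map_of_mem ha, (hlab a ha).trans hneg⟩

end RevWalk

section ParallelComposition

theorem pmap_left {V V' : Type*} [DecidableEq V'] (α β : V) (α' β' : V') :
    pmap α β α' β' α' = Sum.inl α := by
  simp [pmap]

theorem pmap_right {V V' : Type*} [DecidableEq V'] (α β : V) {α' β' : V'} (hαβ' : α' ≠ β') :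
    pmap α β α' β' β' = Sum.inl β := by
  simp [pmap, hαβ'.symm]

variable {V V' : Type*} [DecidableEq V] {A : Finset (V × V)} {A' : Finset (V' × V')} {α β : V}
  {α' β' : V'} {lab : V × V → Bool} {lab' : V' × V' → Bool}

theorem parLab_inl {a : V × V} (ha : a ∈ A) :
    parLab A α α' β' lab lab' (Prod.map Sum.inl Sum.inl a) = lab a := by
  obtain ⟨x, y⟩ := a
  simp [parLab, ha]

variable [DecidableEq V']

theorem mem_parArcs_inl {a : V × V} (ha : a ∈ A) :
    Prod.map Sum.inl Sum.inl a ∈ parArcs A A' α β α' β' :=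
  Finset.mem_union_left _ (Finset.mem_image_of_mem _ ha)

theorem mem_parArcs_pmap {a : V' × V'} (ha : a ∈ A') :
    Prod.map (pmap α β α' β') (pmap α β α' β') a ∈ parArcs A A' α β α' β' :=
  Finset.mem_union_right _ (Finset.mem_image_of_mem _ ha)

theorem parLab_pmap (hαβ : α ≠ β) (hαβ' : α' ≠ β') (hloop' : ∀ a ∈ A', a.1 ≠ a.2)
    (hcol1 : ¬((α, β) ∈ A ∧ (α', β') ∈ A')) (hcol2 : ¬((β, α) ∈ A ∧ (β', α') ∈ A'))
    {a : V' × V'} (ha : a ∈ A') :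
    parLab A α α' β' lab lab' (Prod.map (pmap α β α' β') (pmap α β α' β') a) = lab' a := by
  obtain ⟨u, w⟩ := a
  have huw : u ≠ w := hloop' (u, w) ha
  by_cases hu1 : u = α' <;> by_cases hu2 : u = β' <;>
    by_cases hw1 : w = α' <;> by_cases hw2 : w = β' <;>
    subst_vars <;>
    simp_all [pmap, pinv, parLab, hαβ.symm, hαβ'.symm]

end ParallelComposition

theorem statement17_general {V V' : Type*} [DecidableEq V] [DecidableEq V']
    (A : Finset (V × V)) (A' : Finset (V' × V')) (α β : V) (α' β' : V')
    (hαβ : α ≠ β) (hαβ' : α' ≠ β')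
    (hloop' : ∀ a ∈ A', a.1 ≠ a.2)
    (hcol1 : ¬((α, β) ∈ A ∧ (α', β') ∈ A')) (hcol2 : ¬((β, α) ∈ A ∧ (β', α') ∈ A'))
    (lab : V × V → Bool) (lab' : V' × V' → Bool)
    (h2 : HasClass A lab β α PClass.pos)
    (h1' : HasClass A' lab' α' β' PClass.neg) :
    ¬ Valid (parArcs A A' α β α' β') (parLab A α α' β' lab lab') := by
  intro hD
  obtain ⟨l', hl', hneg'⟩ := h1'
  obtain ⟨⟨l, hl⟩, -⟩ := h2
  have hlab' : ∀ a ∈ A', parLab A α α' β' lab lab'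
      (Prod.map (pmap α β α' β') (pmap α β α' β') a) = lab' a :=
    fun a => parLab_pmap hαβ hαβ' hloop' hcol1 hcol2
  have hwalk' : IsRevWalk (parArcs A A' α β α' β') (parLab A α α' β' lab lab')
      (l'.map (Prod.map (pmap α β α' β') (pmap α β α' β'))) (Sum.inl α) (Sum.inl β) := by
    simpa only [pmap_left, pmap_right α β hαβ'] using
      hl'.map _ (fun _ => mem_parArcs_pmap) hlab'
  have hwalk : IsRevWalk (parArcs A A' α β α' β') (parLab A α α' β' lab lab')
      (l.map (Prod.map Sum.inl Sum.inl)) (Sum.inl β) (Sum.inl α) :=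
    hl.map _ (fun _ => mem_parArcs_inl) (fun _ => parLab_inl)
  obtain ⟨a, ha, hneg⟩ := hneg'.map fun a ha => hlab' a (hl'.2.1 a ha)
  exact hD _ ⟨_, hwalk'.append hwalk⟩ ⟨a, List.mem_append_left _ ha, hneg⟩

/-- For the parallel composition `D` of `(G, α, β)` and `(G', α', β')`, the union of a
labeling in `UD_{α,β}^{+,+}(G)` and a labeling in `UD_{α',β'}^{-,∅}(G')` is not a valid
labeling of `D`. -/
theorem statement17 {V V' : Type*} [DecidableEq V] [DecidableEq V']
    (A : Finset (V × V)) (A' : Finset (V' × V')) (α β : V) (α' β' : V')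
    (hαβ : α ≠ β) (hαβ' : α' ≠ β')
    (hloop : ∀ a ∈ A, a.1 ≠ a.2) (hloop' : ∀ a ∈ A', a.1 ≠ a.2)
    (hcol1 : ¬((α, β) ∈ A ∧ (α', β') ∈ A')) (hcol2 : ¬((β, α) ∈ A ∧ (β', α') ∈ A'))
    (lab : V × V → Bool) (lab' : V' × V' → Bool)
    (hv : Valid A lab) (hv' : Valid A' lab')
    (h1 : HasClass A lab α β PClass.pos) (h2 : HasClass A lab β α PClass.pos)
    (h1' : HasClass A' lab' α' β' PClass.neg) (h2' : HasClass A' lab' β' α' PClass.none) :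
    ¬ Valid (parArcs A A' α β α' β') (parLab A α α' β' lab lab') :=
  statement17_general A A' α β α' β' hαβ hαβ' hloop' hcol1 hcol2 lab lab' h2 h1'

end UD
end
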